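/- arXiv:cs/0602028 — 2 statements merged into one kernel-verified Lean document; each statement's English description precedes it below -/
import Mathlib

section
/- Let Z be a standard normal random variable and for λ > 0 define q(λ) = E[tanh²(λ + √λ Z)]. Then q is a continuous, strictly increasing function of λ on (0,∞), with q(λ) → 0 as λ → 0⁺ and q(λ) → 1 as λ → ∞. -/
open MeasureTheory ProbabilityTheory Real Filter

/-- The standard Gaussian measure on ℝ. -/
noncomputable def stdGaussian : Measure ℝ := gaussianReal 0 1

/-- `q l = E[tanh² (l + √l Z)]` for `Z ~ N(0,1)`. -/
noncomputable def qfun (l : ℝ) : ℝ :=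
  ∫ z, Real.tanh (l + Real.sqrt l * z) ^ 2 ∂stdGaussian

/-!
Write `Y = λ + √λ Z`. Since the density of `Y` satisfies `p(-y) = e^{-2y} p(y)` (Nishimori
symmetry), `f(-y) e^{-2y} = -f(y)` for `f = tanh² - tanh` forces `E tanh² Y = E tanh Y`.
Gaussian integration by parts, `E[Z u(Z)] = E[u'(Z)]`, turns `d/dλ E g(Y)` into
`E[g'(Y) + g''(Y)/2]`, which for `g = tanh` is `E[(1 - tanh Y)² (1 + tanh Y)] > 0`.
Continuity and both limits follow by dominated convergence: `tanh²` is bounded, `Y = 0` at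
`λ = 0`, and `Y → ∞` pointwise as `λ → ∞`.
-/

open Topology

local notation "φ" => gaussianPDFReal 0 1

lemma gaussianPDFReal_zero_one_neg (z : ℝ) : φ (-z) = φ z := by
  simp [gaussianPDFReal]

lemma gaussianPDFReal_zero_one_sub (w c : ℝ) : φ (w - c) = exp (c * w - c ^ 2 / 2) * φ w := by
  simp only [gaussianPDFReal, mul_left_comm (exp _), ← exp_add]
  congr 2
  push_cast
  ring

lemma gaussianPDFReal_zero_one_apply (z : ℝ) :
    φ z = (√(2 * π))⁻¹ * exp (-(z ^ 2 / 2)) := by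
  simp [gaussianPDFReal, neg_div]

lemma hasDerivAt_gaussianPDFReal_zero_one (z : ℝ) : HasDerivAt φ (-(z * φ z)) z := by
  rw [funext gaussianPDFReal_zero_one_apply]
  refine ((((hasDerivAt_pow 2 z).div_const 2).neg.exp).const_mul _).congr_deriv ?_
  simp only [Pi.neg_apply]
  ring

instance : IsProbabilityMeasure stdGaussian := by
  unfold _root_.stdGaussian; infer_instance

lemma integral_stdGaussian (f : ℝ → ℝ) : ∫ z, f z ∂stdGaussian = ∫ z, φ z * f z :=
  integral_gaussianReal_eq_integral_smul one_ne_zero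

lemma integrable_stdGaussian_iff {f : ℝ → ℝ} :
    Integrable f stdGaussian ↔ Integrable (fun z => φ z * f z) := by
  rw [_root_.stdGaussian, gaussianReal_of_var_ne_zero 0 one_ne_zero,
    integrable_withDensity_iff_integrable_smul' (measurable_gaussianPDF 0 1)
      (ae_of_all _ fun _ => gaussianPDF_lt_top)]
  simp

lemma integrable_abs_stdGaussian : Integrable (fun z => |z|) stdGaussian :=
  ((memLp_id_gaussianReal 1).integrable le_rfl).abs

lemma integrable_stdGaussian_of_abs_le {f : ℝ → ℝ} (hf : AEStronglyMeasurable f stdGaussian)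
    {a b : ℝ} (h : ∀ z, |f z| ≤ a + b * |z|) : Integrable f stdGaussian :=
  ((integrable_const a).add (integrable_abs_stdGaussian.const_mul b)).mono' hf
    (ae_of_all _ fun z => h z)

theorem integral_mul_stdGaussian_eq_integral_deriv {u u' : ℝ → ℝ}
    (hu : ∀ z, HasDerivAt u (u' z) z) (hu_int : Integrable u stdGaussian)
    (hzu_int : Integrable (fun z => z * u z) stdGaussian) (hu'_int : Integrable u' stdGaussian) :
    ∫ z, z * u z ∂stdGaussian = ∫ z, u' z ∂stdGaussian := by
  rw [integrable_stdGaussian_iff] at hu_int hzu_int hu'_int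
  have key := integral_mul_deriv_eq_deriv_mul_of_integrable (fun z _ => hu z)
    (fun z _ => hasDerivAt_gaussianPDFReal_zero_one z)
    (hzu_int.neg.congr (ae_of_all _ fun z => by simp only [Pi.mul_apply, Pi.neg_apply]; ring))
    (hu'_int.congr (ae_of_all _ fun z => by simp only [Pi.mul_apply]; ring))
    (hu_int.congr (ae_of_all _ fun z => by simp only [Pi.mul_apply]; ring))
  calc ∫ z, z * u z ∂stdGaussian = -∫ z, u z * -(z * φ z) := by
        rw [integral_stdGaussian, ← integral_neg]; congr 1 with z; ring
    _ = ∫ z, u' z ∂stdGaussian := by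
        rw [key, neg_neg, integral_stdGaussian]; congr 1 with z; ring

theorem integral_stdGaussian_nishimori {l : ℝ} (hl : 0 ≤ l) (f : ℝ → ℝ) :
    ∫ z, f (-(l + √l * z)) * exp (-(2 * (l + √l * z))) ∂stdGaussian
      = ∫ z, f (l + √l * z) ∂stdGaussian := by
  have hs : √l ^ 2 = l := sq_sqrt hl
  rw [integral_stdGaussian, integral_stdGaussian, ← integral_sub_right_eq_self _ (2 * √l),
    ← integral_neg_eq_self (fun w => φ w * f (l + √l * w))]
  congr 1 with w
  have harg : -(l + √l * (w - 2 * √l)) = l + √l * -w := by linear_combination 2 * hs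
  have hexp :
      exp (2 * √l * w - (2 * √l) ^ 2 / 2) * exp (-(2 * (l + √l * (w - 2 * √l)))) = 1 := by
    rw [← exp_add, exp_eq_one_iff]
    linear_combination 2 * hs
  rw [gaussianPDFReal_zero_one_sub, gaussianPDFReal_zero_one_neg, harg]
  linear_combination (φ w * f (l + √l * -w)) * hexp

noncomputable def gaussAvg (g : ℝ → ℝ) (l : ℝ) : ℝ :=
  ∫ z, g (l + √l * z) ∂stdGaussian

lemma gaussAvg_zero (g : ℝ → ℝ) : gaussAvg g 0 = g 0 := by
  simp [gaussAvg]

lemma tendsto_add_sqrt_mul_atTop (z : ℝ) : Tendsto (fun l => l + √l * z) atTop atTop := by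
  refine (tendsto_sqrt_atTop.atTop_mul_atTop₀
    (tendsto_atTop_add_const_right _ z tendsto_sqrt_atTop)).congr' ?_
  filter_upwards [eventually_ge_atTop 0] with l hl
  rw [mul_add, mul_self_sqrt hl]

section

variable {g : ℝ → ℝ} {C : ℝ}

lemma integrable_comp_add_sqrt_mul (hg : Continuous g) (hC : ∀ x, |g x| ≤ C) (l : ℝ) :
    Integrable (fun z => g (l + √l * z)) stdGaussian :=
  .of_bound (by fun_prop) C (ae_of_all _ fun _ => hC _)

lemma continuous_gaussAvg (hg : Continuous g) (hC : ∀ x, |g x| ≤ C) :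
    Continuous (gaussAvg g) :=
  continuous_of_dominated (fun _ => by fun_prop) (fun _ => ae_of_all _ fun _ => hC _)
    (integrable_const C) (ae_of_all _ fun _ => by fun_prop)

lemma tendsto_gaussAvg_atTop (hg : Continuous g) (hC : ∀ x, |g x| ≤ C) {c : ℝ}
    (hlim : Tendsto g atTop (𝓝 c)) : Tendsto (gaussAvg g) atTop (𝓝 c) := by
  have h := tendsto_integral_filter_of_dominated_convergence (μ := stdGaussian) (fun _ => C)
    (Eventually.of_forall fun _ => by fun_prop) (Eventually.of_forall fun _ =>
      ae_of_all _ fun _ => hC _) (integrable_const C)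
    (ae_of_all _ fun z => hlim.comp (tendsto_add_sqrt_mul_atTop z))
  rw [integral_const, probReal_univ, one_smul] at h
  exact h

lemma gaussAvg_pos (hg : Continuous g) (hC : ∀ x, |g x| ≤ C) (hpos : ∀ x, 0 < g x) (l : ℝ) :
    0 < gaussAvg g l := by
  rw [gaussAvg, integral_pos_iff_support_of_nonneg (fun z => (hpos _).le)
    (integrable_comp_add_sqrt_mul hg hC l)]
  simp [Function.support, (hpos _).ne']

end

section

variable {g g' g'' : ℝ → ℝ} {C l : ℝ}

lemma hasDerivAt_add_sqrt_mul (z : ℝ) {x : ℝ} (hx : 0 < x) :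
    HasDerivAt (fun x => x + √x * z) (1 + z / (2 * √x)) x := by
  refine ((hasDerivAt_id x).add ((hasDerivAt_sqrt hx.ne').mul_const z)).congr_deriv ?_
  ring

lemma hasDerivAt_gaussAvg_integral (hg : ∀ x, HasDerivAt g (g' x) x) (hC : ∀ x, |g x| ≤ C)
    (hC' : ∀ x, |g' x| ≤ C) (hl : 0 < l) :
    HasDerivAt (gaussAvg g) (∫ z, g' (l + √l * z) * (1 + z / (2 * √l)) ∂stdGaussian) l := by
  have hgc : Continuous g := continuous_iff_continuousAt.2 fun x => (hg x).continuousAt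
  have hg'm : Measurable g' := by
    rw [show g' = deriv g from funext fun x => (hg x).deriv.symm]
    exact measurable_deriv g
  have hl2 : 0 < l / 2 := half_pos hl
  have hC0 : 0 ≤ C := (abs_nonneg _).trans (hC 0)
  refine (hasDerivAt_integral_of_dominated_loc_of_deriv_le (Ioi_mem_nhds (half_lt_self hl))
    (Eventually.of_forall fun x => by fun_prop) (integrable_comp_add_sqrt_mul hgc hC l)
    (by fun_prop) (bound := fun z => C + C / (2 * √(l / 2)) * |z|) ?_
    ((integrable_const C).add (integrable_abs_stdGaussian.const_mul _))
    (ae_of_all _ fun z x hx => (hg _).comp x (hasDerivAt_add_sqrt_mul z (hl2.trans hx)))).2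
  refine ae_of_all _ fun z x (hx : l / 2 < x) => ?_
  have hsx : √(l / 2) ≤ √x := sqrt_le_sqrt hx.le
  have hs2 : 0 < √(l / 2) := sqrt_pos.2 hl2
  have hfac : |1 + z / (2 * √x)| ≤ 1 + |z| / (2 * √(l / 2)) := by
    calc |1 + z / (2 * √x)| ≤ 1 + |z| / (2 * √x) := by
          simpa [abs_div, abs_of_pos (sqrt_pos.2 (hl2.trans hx))]
            using abs_add_le 1 (z / (2 * √x))
      _ ≤ 1 + |z| / (2 * √(l / 2)) := by gcongr
  rw [Real.norm_eq_abs, abs_mul]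
  calc |g' (x + √x * z)| * |1 + z / (2 * √x)| ≤ C * (1 + |z| / (2 * √(l / 2))) :=
        mul_le_mul (hC' _) hfac (abs_nonneg _) hC0
    _ = C + C / (2 * √(l / 2)) * |z| := by ring

lemma integral_mul_one_add_div_eq_gaussAvg (hg' : ∀ x, HasDerivAt g' (g'' x) x)
    (hC' : ∀ x, |g' x| ≤ C) (hC'' : ∀ x, |g'' x| ≤ C) (hl : 0 < l) :
    ∫ z, g' (l + √l * z) * (1 + z / (2 * √l)) ∂stdGaussian
      = gaussAvg (fun x => g' x + g'' x / 2) l := by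
  have hg'c : Continuous g' := continuous_iff_continuousAt.2 fun x => (hg' x).continuousAt
  have hg''m : Measurable g'' := by
    rw [show g'' = deriv g' from funext fun x => (hg' x).deriv.symm]
    exact measurable_deriv g'
  have hs : 0 < √l := sqrt_pos.2 hl
  have hu : ∀ z, HasDerivAt (fun z => g' (l + √l * z)) (g'' (l + √l * z) * √l) z := fun z =>
    (hg' _).comp z (((hasDerivAt_id z).const_mul √l).const_add l |>.congr_deriv (mul_one _))
  have hu_int := integrable_comp_add_sqrt_mul hg'c hC' l
  have hzu_int : Integrable (fun z => z * g' (l + √l * z)) stdGaussian :=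
    integrable_stdGaussian_of_abs_le (by fun_prop) (a := 0) (b := C) fun z => by
      rw [abs_mul, zero_add, mul_comm C]
      exact mul_le_mul_of_nonneg_left (hC' _) (abs_nonneg z)
  have hg''_int : Integrable (fun z => g'' (l + √l * z)) stdGaussian :=
    .of_bound (by fun_prop : Measurable _).aestronglyMeasurable C (ae_of_all _ fun _ => hC'' _)
  have stein := integral_mul_stdGaussian_eq_integral_deriv hu hu_int hzu_int
    (hg''_int.mul_const √l)
  calc ∫ z, g' (l + √l * z) * (1 + z / (2 * √l)) ∂stdGaussian
      = ∫ z, g' (l + √l * z) ∂stdGaussian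
          + (2 * √l)⁻¹ * ∫ z, z * g' (l + √l * z) ∂stdGaussian := by
        rw [← integral_const_mul, ← integral_add hu_int (hzu_int.const_mul _)]
        congr 1 with z
        ring
    _ = ∫ z, g' (l + √l * z) ∂stdGaussian + ∫ z, g'' (l + √l * z) / 2 ∂stdGaussian := by
        rw [stein, ← integral_const_mul]
        congr 2 with z
        field_simp
    _ = gaussAvg (fun x => g' x + g'' x / 2) l :=
        (integral_add hu_int (hg''_int.div_const 2)).symm

theorem hasDerivAt_gaussAvg (hg : ∀ x, HasDerivAt g (g' x) x)
    (hg' : ∀ x, HasDerivAt g' (g'' x) x) (hC : ∀ x, |g x| ≤ C) (hC' : ∀ x, |g' x| ≤ C)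
    (hC'' : ∀ x, |g'' x| ≤ C) (hl : 0 < l) :
    HasDerivAt (gaussAvg g) (gaussAvg (fun x => g' x + g'' x / 2) l) l :=
  integral_mul_one_add_div_eq_gaussAvg hg' hC' hC'' hl ▸ hasDerivAt_gaussAvg_integral hg hC hC' hl

end

lemma Real.hasDerivAt_tanh (x : ℝ) : HasDerivAt tanh (1 - tanh x ^ 2) x := by
  have h := (hasDerivAt_sinh x).div (hasDerivAt_cosh x) (cosh_pos x).ne'
  rw [show tanh = fun x => sinh x / cosh x from funext tanh_eq_sinh_div_cosh]
  refine h.congr_deriv ?_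
  have := (cosh_pos x).ne'
  field_simp

@[fun_prop]
lemma Real.continuous_tanh : Continuous tanh :=
  continuous_iff_continuousAt.2 fun x => (hasDerivAt_tanh x).continuousAt

lemma Real.one_add_tanh_mul_exp (x : ℝ) : (1 + tanh x) * exp (-(2 * x)) = 1 - tanh x := by
  have := (cosh_pos x).ne'
  rw [tanh_eq_sinh_div_cosh]
  field_simp
  rw [cosh_add_sinh, cosh_sub_sinh, ← exp_add]
  ring_nf

lemma Real.tendsto_tanh_atTop : Tendsto tanh atTop (𝓝 1) := by
  have hexp : Tendsto (fun x => 2 * exp (-(2 * x))) atTop (𝓝 0) := by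
    simpa using (tendsto_exp_atBot.comp (tendsto_neg_atTop_atBot.comp
      (tendsto_id.const_mul_atTop two_pos))).const_mul 2
  have hgap : Tendsto (fun x => 1 - tanh x) atTop (𝓝 0) := by
    refine tendsto_of_tendsto_of_tendsto_of_le_of_le tendsto_const_nhds hexp
      (fun x => sub_nonneg.2 (tanh_lt_one x).le) fun x => ?_
    rw [← one_add_tanh_mul_exp]
    gcongr
    linarith [tanh_lt_one x]
  simpa using (tendsto_const_nhds (x := (1 : ℝ))).sub hgap

lemma Real.abs_tanh_le_one (x : ℝ) : |tanh x| ≤ 1 := (abs_tanh_lt_one x).le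

lemma Real.abs_tanh_sq_le_one (x : ℝ) : |tanh x ^ 2| ≤ 1 := by
  rw [abs_pow]
  exact pow_le_one₀ (abs_nonneg _) (abs_tanh_le_one x)

lemma gaussAvg_tanh_sq {l : ℝ} (hl : 0 ≤ l) :
    gaussAvg (fun x => tanh x ^ 2) l = gaussAvg tanh l := by
  have hodd (y : ℝ) : (tanh (-y) ^ 2 - tanh (-y)) * exp (-(2 * y)) = -(tanh y ^ 2 - tanh y) := by
    rw [tanh_neg]
    linear_combination tanh y * one_add_tanh_mul_exp y
  have h := integral_stdGaussian_nishimori hl fun y => tanh y ^ 2 - tanh y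
  simp only [hodd, integral_neg] at h
  rw [gaussAvg, gaussAvg, ← sub_eq_zero, ← integral_sub
    (integrable_comp_add_sqrt_mul (by fun_prop) abs_tanh_sq_le_one l)
    (integrable_comp_add_sqrt_mul continuous_tanh abs_tanh_le_one l)]
  linarith

lemma hasDerivAt_gaussAvg_tanh {l : ℝ} (hl : 0 < l) :
    HasDerivAt (gaussAvg tanh) (gaussAvg (fun x => (1 - tanh x) ^ 2 * (1 + tanh x)) l) l := by
  have hg' (x : ℝ) : HasDerivAt (fun x => 1 - tanh x ^ 2) (-(2 * tanh x * (1 - tanh x ^ 2))) x :=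
    (((hasDerivAt_tanh x).pow 2).const_sub 1).congr_deriv (by norm_num)
  have hbound (x : ℝ) :
      |tanh x| ≤ 2 ∧ |1 - tanh x ^ 2| ≤ 2 ∧ |-(2 * tanh x * (1 - tanh x ^ 2))| ≤ 2 := by
    have h₁ := neg_one_lt_tanh x
    have h₂ := tanh_lt_one x
    have h₃ : 0 ≤ 1 - tanh x ^ 2 := by nlinarith
    refine ⟨?_, ?_, ?_⟩ <;> rw [abs_le] <;> constructor <;>
      nlinarith [mul_nonneg h₃ (sub_nonneg.2 h₂.le),
        mul_nonneg h₃ (neg_le_iff_add_nonneg.1 h₁.le)]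
  convert hasDerivAt_gaussAvg hasDerivAt_tanh hg' (fun x => (hbound x).1) (fun x => (hbound x).2.1)
    (fun x => (hbound x).2.2) hl using 2
  ext x
  ring

lemma strictMonoOn_gaussAvg_tanh : StrictMonoOn (gaussAvg tanh) (Set.Ici 0) := by
  refine strictMonoOn_of_deriv_pos (convex_Ici 0)
    (continuous_gaussAvg continuous_tanh abs_tanh_le_one).continuousOn fun l hl => ?_
  rw [interior_Ici] at hl
  rw [(hasDerivAt_gaussAvg_tanh hl).deriv]
  have h₁ := neg_one_lt_tanh
  have h₂ := tanh_lt_one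
  refine gaussAvg_pos (by fun_prop) (C := 8) (fun x => ?_) (fun x => ?_) l
  · rw [abs_le]
    constructor <;> nlinarith [h₁ x, h₂ x]
  · exact mul_pos (pow_pos (sub_pos.2 (h₂ x)) 2) (by linarith [h₁ x])

/-- `q` is continuous and strictly increasing on `(0,∞)`, with `q(λ) → 0` as `λ → 0⁺`
and `q(λ) → 1` as `λ → ∞`. -/
theorem qfun_continuous_strictMono_limits :
    ContinuousOn qfun (Set.Ioi (0 : ℝ)) ∧
    StrictMonoOn qfun (Set.Ioi (0 : ℝ)) ∧
    Tendsto qfun (nhdsWithin 0 (Set.Ioi 0)) (nhds 0) ∧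
    Tendsto qfun atTop (nhds 1) := by
  have hq : qfun = gaussAvg fun x => tanh x ^ 2 := rfl
  have hcont : Continuous qfun := continuous_gaussAvg (by fun_prop) abs_tanh_sq_le_one
  refine ⟨hcont.continuousOn, ?_, ?_, ?_⟩
  · exact (strictMonoOn_gaussAvg_tanh.mono Set.Ioi_subset_Ici_self).congr fun l hl =>
      (gaussAvg_tanh_sq (Set.mem_Ioi.1 hl).le).symm
  · have h0 : qfun 0 = 0 := by simp [hq, gaussAvg_zero]
    simpa [h0] using (hcont.tendsto 0).mono_left (nhdsWithin_le_nhds (s := Set.Ioi 0))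
  · rw [hq, ← one_pow 2]
    exact tendsto_gaussAvg_atTop (by fun_prop) abs_tanh_sq_le_one (tendsto_tanh_atTop.pow 2)
end

section
/- If X is a symmetric random variable, then E[tanh(X)] = E[tanh²(X)], provided both expectations exist. -/
/-!
Apply the symmetry to `f x = tanh x * (1 + tanh x)`. Since `e^{-2x} (1 + tanh x) = 1 - tanh x`,
the right side becomes `E[tanh X - tanh² X]` and the left side its negative, so it vanishes.
-/

open MeasureTheory ProbabilityTheory Real Filter

/-- A real random variable `X` on `(Ω, μ)` is (log-likelihood-ratio) symmetric if
`E[f(-X)] = E[e^{-2X} f(X)]` for every bounded measurable `f`. -/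
def IsLLRSymmetric {Ω : Type*} [MeasurableSpace Ω] (μ : Measure Ω) (X : Ω → ℝ) : Prop :=
  ∀ f : ℝ → ℝ, Measurable f → (∃ C, ∀ x, |f x| ≤ C) →
    ∫ ω, f (-(X ω)) ∂μ = ∫ ω, Real.exp (-2 * X ω) * f (X ω) ∂μ

namespace Real

theorem continuous_tanh_s4 : Continuous tanh := by
  rw [show tanh = fun x => sinh x / cosh x from funext tanh_eq_sinh_div_cosh]
  exact continuous_sinh.div continuous_cosh fun x => (cosh_pos x).ne'

theorem exp_neg_two_mul_mul_one_add_tanh (x : ℝ) :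
    exp (-2 * x) * (1 + tanh x) = 1 - tanh x := by
  have hpos : 0 < exp x + exp (-x) := by positivity
  have hexp : exp (-2 * x) * exp x = exp (-x) := by rw [← exp_add]; ring_nf
  rw [tanh_eq, one_add_div hpos.ne', one_sub_div hpos.ne', mul_div_assoc']
  congr 1
  linear_combination 2 * hexp

end Real

theorem IsLLRSymmetric.integral_exp_mul_eq_zero {Ω : Type*} [MeasurableSpace Ω]
    {μ : Measure Ω} {X : Ω → ℝ} (hsym : IsLLRSymmetric μ X) {g : ℝ → ℝ} (hg : Measurable g)
    (hbdd : ∃ C, ∀ x, |g x| ≤ C) (hg_neg : ∀ x, g (-x) = -(exp (-2 * x) * g x)) :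
    ∫ ω, exp (-2 * X ω) * g (X ω) ∂μ = 0 := by
  have h := hsym g hg hbdd
  simp only [hg_neg, integral_neg] at h
  linarith

theorem symmetric_tanh_eq_tanh_sq_general {Ω : Type*} [MeasurableSpace Ω] (μ : Measure Ω)
    (X : Ω → ℝ)
    (hsym : IsLLRSymmetric μ X)
    (h1 : Integrable (fun ω => Real.tanh (X ω)) μ)
    (h2 : Integrable (fun ω => Real.tanh (X ω) ^ 2) μ) :
    ∫ ω, Real.tanh (X ω) ∂μ = ∫ ω, Real.tanh (X ω) ^ 2 ∂μ := by
  have hexp (x : ℝ) : exp (-2 * x) * (tanh x * (1 + tanh x)) = tanh x - tanh x ^ 2 := by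
    rw [mul_left_comm, exp_neg_two_mul_mul_one_add_tanh]; ring
  have hbdd (x : ℝ) : |tanh x * (1 + tanh x)| ≤ 2 := by
    have hlo := neg_one_lt_tanh x
    have hhi := tanh_lt_one x
    exact abs_le.mpr ⟨by nlinarith, by nlinarith⟩
  have hzero := hsym.integral_exp_mul_eq_zero (g := fun x => tanh x * (1 + tanh x))
    (continuous_tanh_s4.mul (continuous_const.add continuous_tanh_s4)).measurable ⟨2, hbdd⟩
    fun x => by rw [hexp, tanh_neg]; ring
  simp only [hexp] at hzero
  rwa [integral_sub h1 h2, sub_eq_zero] at hzero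

/-- If `X` is symmetric then `E[tanh X] = E[tanh² X]` (both expectations exist
since `tanh` is bounded and `μ` is a probability measure). -/
theorem symmetric_tanh_eq_tanh_sq {Ω : Type*} [MeasurableSpace Ω] (μ : Measure Ω)
    [IsProbabilityMeasure μ] (X : Ω → ℝ) (hX : Measurable X)
    (hsym : IsLLRSymmetric μ X)
    (h1 : Integrable (fun ω => Real.tanh (X ω)) μ)
    (h2 : Integrable (fun ω => Real.tanh (X ω) ^ 2) μ) :
    ∫ ω, Real.tanh (X ω) ∂μ = ∫ ω, Real.tanh (X ω) ^ 2 ∂μ :=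
  symmetric_tanh_eq_tanh_sq_general μ X hsym h1 h2
end
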